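/- arXiv:2406.02175 — 2 statements merged into one kernel-verified Lean document; each statement's English description precedes it below -/
import Mathlib

section
/- For every policy π and every branch l, the value of π from l equals the regularized objective of the sub-DT of π rooted in l: V^π(l) = R(T_l^π) = −λ·splits(T_l^π) + H(T_l^π). -/
open Finset

/-- A branch: for each feature, either unused (`none`) or fixed to a category. -/
abbrev Branch (q : ℕ) (C : Fin q → ℕ) : Type := ∀ i : Fin q, Option (Fin (C i))

/-- States: `Sum.inl l` is the (non-terminal) branch `l`, `Sum.inr l` is its terminal state `l̄`. -/
abbrev BState (q : ℕ) (C : Fin q → ℕ) : Type := Branch q C ⊕ Branch q C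

/-- The root branch `Ω`. -/
def root (q : ℕ) (C : Fin q → ℕ) : Branch q C := fun _ => none

/-- The child of `l` obtained by fixing unused feature `i` to category `j`. -/
def child {q : ℕ} {C : Fin q → ℕ} (l : Branch q C) (i : Fin q) (j : Fin (C i)) : Branch q C :=
  Function.update l i (some j)

/-- `Children(l, i)`. -/
def childrenF {q : ℕ} {C : Fin q → ℕ} (l : Branch q C) (i : Fin q) : Finset (Branch q C) :=
  Finset.univ.image (fun j : Fin (C i) => child l i j)

/-- A policy: `act l = none` is the terminal action `ā`, `act l = some i` splits on the
unused feature `i`. -/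
structure Policy (q : ℕ) (C : Fin q → ℕ) where
  act : Branch q C → Option (Fin q)
  valid : ∀ l i, act l = some i → l i = none

/-- Transition set of the action taken by `π` at branch `l`. -/
def stepSet {q : ℕ} {C : Fin q → ℕ} (π : Policy q C) (l : Branch q C) : Finset (BState q C) :=
  match π.act l with
  | none => {Sum.inr l}
  | some i => (childrenF l i).image Sum.inl

/-- Trajectory of policy `π` from branch `l`. -/
def traj {q : ℕ} {C : Fin q → ℕ} (π : Policy q C) (l : Branch q C) : ℕ → Finset (BState q C)
  | 0 => {Sum.inl l}
  | t + 1 => (traj π l t).biUnion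
      (fun s => Sum.elim (fun lu => stepSet π lu) (fun lu => ({Sum.inr lu} : Finset (BState q C))) s)

/-- `τ_l^π`: minimal time `t ≥ 1` at which the trajectory consists of terminal states only. -/
noncomputable def tau {q : ℕ} {C : Fin q → ℕ} (π : Policy q C) (l : Branch q C) : ℕ :=
  sInf {t : ℕ | 1 ≤ t ∧ ∀ x ∈ traj π l t, x.isRight}

/-- A data point `x` is in branch `l`. -/
def inBranch {q : ℕ} {C : Fin q → ℕ} (l : Branch q C) (x : ∀ i : Fin q, Fin (C i)) : Prop :=
  ∀ (i : Fin q) (c : Fin (C i)), l i = some c → x i = c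

instance {q : ℕ} {C : Fin q → ℕ} (l : Branch q C) (x : ∀ i, Fin (C i)) :
    Decidable (inBranch l x) := by unfold inBranch; infer_instance

/-- `n(l)`: number of data points in `l`. -/
def nIn {q K : ℕ} {C : Fin q → ℕ} (D : Multiset ((∀ i : Fin q, Fin (C i)) × Fin K))
    (l : Branch q C) : ℕ :=
  (D.filter (fun p => inBranch l p.1)).card

/-- `n_k(l)`: number of data points in `l` of class `k`. -/
def nk {q K : ℕ} {C : Fin q → ℕ} (D : Multiset ((∀ i : Fin q, Fin (C i)) × Fin K))
    (l : Branch q C) (k : Fin K) : ℕ :=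
  (D.filter (fun p => inBranch l p.1 ∧ p.2 = k)).card

/-- `H(l) = (max_k n_k(l)) / n`. -/
noncomputable def Hb {q K : ℕ} {C : Fin q → ℕ} (D : Multiset ((∀ i : Fin q, Fin (C i)) × Fin K))
    (l : Branch q C) : ℝ :=
  ((Finset.univ.sup (fun k : Fin K => nk D l k) : ℕ) : ℝ) / (Multiset.card D : ℝ)

/-- Reward collected at a state of the trajectory: `H(l)` for the terminal action,
`-λ` for a split action, `0` at terminal states. -/
noncomputable def rew {q K : ℕ} {C : Fin q → ℕ}
    (D : Multiset ((∀ i : Fin q, Fin (C i)) × Fin K)) (lam : ℝ) (π : Policy q C) :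
    BState q C → ℝ
  | Sum.inl lu => match π.act lu with
      | none => Hb D lu
      | some _ => -lam
  | Sum.inr _ => 0

/-- Value `V^π(l)`. -/
noncomputable def V {q K : ℕ} {C : Fin q → ℕ}
    (D : Multiset ((∀ i : Fin q, Fin (C i)) × Fin K)) (lam : ℝ)
    (π : Policy q C) (l : Branch q C) : ℝ :=
  ∑ t ∈ Finset.range (tau π l), ∑ x ∈ traj π l t, rew D lam π x

/-- State-action value `Q^π(l, a)`. -/
noncomputable def Qv {q K : ℕ} {C : Fin q → ℕ}
    (D : Multiset ((∀ i : Fin q, Fin (C i)) × Fin K)) (lam : ℝ)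
    (π : Policy q C) (l : Branch q C) : Option (Fin q) → ℝ
  | none => Hb D l
  | some i => -lam + ∑ j : Fin (C i), V D lam π (child l i j)

/-- The available actions `A(l)`. -/
def Avail {q : ℕ} {C : Fin q → ℕ} (l : Branch q C) : Finset (Option (Fin q)) :=
  insert none ((Finset.univ.filter (fun i : Fin q => l i = none)).image some)

theorem Avail_nonempty {q : ℕ} {C : Fin q → ℕ} (l : Branch q C) : (Avail l).Nonempty :=
  ⟨none, Finset.mem_insert_self _ _⟩

/-- The sub-DT of `π` rooted in `l`: the branches whose terminal states constitute
the trajectory at time `τ_l^π`. -/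
noncomputable def subDTof {q : ℕ} {C : Fin q → ℕ} (π : Policy q C) (l : Branch q C) : Finset (Branch q C) :=
  (traj π l (tau π l)).image (Sum.elim id id)

/-- `SubDT l T m`: `T` is a sub-DT rooted in `l` obtained by `m` split operations. -/
inductive SubDT {q : ℕ} {C : Fin q → ℕ} : Branch q C → Finset (Branch q C) → ℕ → Prop
  | leaf (l : Branch q C) : SubDT l {l} 0
  | split (l : Branch q C) (T : Finset (Branch q C)) (m : ℕ) (l' : Branch q C) (i : Fin q)
      (hT : SubDT l T m) (hmem : l' ∈ T) (hnone : l' i = none) :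
      SubDT l (T.erase l' ∪ childrenF l' i) (m + 1)

/-- `H(T) = ∑_{l ∈ T} H(l)`. -/
noncomputable def HT {q K : ℕ} {C : Fin q → ℕ}
    (D : Multiset ((∀ i : Fin q, Fin (C i)) × Fin K)) (T : Finset (Branch q C)) : ℝ :=
  ∑ l ∈ T, Hb D l

/-- `splits(l)`: number of features used by branch `l`. -/
def nsplits {q : ℕ} {C : Fin q → ℕ} (l : Branch q C) : ℕ :=
  (Finset.univ.filter (fun i : Fin q => l i ≠ none)).card

/-!
Induction on the number of unused features of `l`. If `π` stops at `l`, both sides equal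
`H(l)`. If `π` splits `l` on `i`, then from time `1` on the trajectory of `l` is the union of
the trajectories of the children `l[i ↦ j]`, and these are disjoint because every state of the
trajectory from `l[i ↦ j]` still fixes feature `i` to `j`. Hence
`V^π(l) = -λ + ∑ⱼ V^π(l[i ↦ j])` and `T_l^π = ⋃ⱼ T_{l[i ↦ j]}^π`, and grafting the children's
sub-DTs onto `Children(l, i)` one at a time gives a sub-DT with `1 + ∑ⱼ mⱼ` splits.
Trajectories become terminal by time `q + 1`, since a branch still active at time `t` fixes
`t` features.
-/

theorem Finset.biUnion_update_eq_erase_union {ι α : Type*} [Fintype ι] [DecidableEq ι]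
    [DecidableEq α] {F : ι → Finset α} {j : ι} {a : α} (hj : F j = {a})
    (ha : ∀ j', j' ≠ j → a ∉ F j') (S : Finset α) :
    univ.biUnion (Function.update F j S) = (univ.biUnion F).erase a ∪ S := by
  ext x
  simp only [mem_biUnion, mem_univ, true_and, mem_union, mem_erase]
  constructor
  · rintro ⟨j', hx⟩
    rcases eq_or_ne j' j with rfl | hne
    · exact .inr (by simpa using hx)
    · rw [Function.update_of_ne hne] at hx
      exact .inl ⟨fun hxa => ha j' hne (hxa ▸ hx), j', hx⟩
  · rintro (⟨hxa, j', hx⟩ | hx)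
    · refine ⟨j', ?_⟩
      rcases eq_or_ne j' j with rfl | hne
      · simp [hj, hxa] at hx
      · rwa [Function.update_of_ne hne]
    · exact ⟨j, by simpa using hx⟩

section Branches

variable {q : ℕ} {C : Fin q → ℕ}

def Extends (l l' : Branch q C) : Prop := ∀ i c, l i = some c → l' i = some c

theorem Extends.refl (l : Branch q C) : Extends l l := fun _ _ h => h

theorem Extends.trans {l₁ l₂ l₃ : Branch q C} (h₁ : Extends l₁ l₂) (h₂ : Extends l₂ l₃) :
    Extends l₁ l₃ := fun i c h => h₂ i c (h₁ i c h)

@[simp]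
theorem child_apply_self (l : Branch q C) (i : Fin q) (j : Fin (C i)) : child l i j i = some j :=
  Function.update_self i _ l

theorem child_apply_of_ne (l : Branch q C) {i i' : Fin q} (h : i' ≠ i) (j : Fin (C i)) :
    child l i j i' = l i' :=
  Function.update_of_ne h _ l

theorem extends_child {l : Branch q C} {i : Fin q} (hi : l i = none) (j : Fin (C i)) :
    Extends l (child l i j) := by
  intro i' c hc
  rcases eq_or_ne i' i with rfl | hne
  · simp [hi] at hc
  · rwa [child_apply_of_ne l hne]

theorem eq_of_extends_child {l x : Branch q C} {i : Fin q} {j j' : Fin (C i)}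
    (hj : Extends (child l i j) x) (hj' : Extends (child l i j') x) : j = j' := by
  simpa using (hj i j (child_apply_self l i j)).symm.trans (hj' i j' (child_apply_self l i j'))

theorem mem_childrenF {l l' : Branch q C} {i : Fin q} :
    l' ∈ childrenF l i ↔ ∃ j, child l i j = l' := by
  simp [childrenF]

theorem nsplits_le (l : Branch q C) : nsplits l ≤ q :=
  (card_le_univ _).trans_eq (Fintype.card_fin q)

theorem nsplits_lt {l : Branch q C} {i : Fin q} (hi : l i = none) : nsplits l < q :=
  (card_lt_univ_of_notMem (x := i) (by simp [hi])).trans_eq (Fintype.card_fin q)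

theorem nsplits_child {l : Branch q C} {i : Fin q} (hi : l i = none) (j : Fin (C i)) :
    nsplits (child l i j) = nsplits l + 1 := by
  have : univ.filter (fun i' => child l i j i' ≠ none) =
      insert i (univ.filter fun i' => l i' ≠ none) := by
    ext i'
    rcases eq_or_ne i' i with rfl | hne
    · simp
    · simp [child_apply_of_ne l hne, hne]
  rw [nsplits, this, card_insert_of_notMem (by simp [hi]), nsplits]

end Branches

section Trajectories

variable {q K : ℕ} {C : Fin q → ℕ} {π : Policy q C} {l : Branch q C}

theorem stepSet_of_act_none (h : π.act l = none) : stepSet π l = {Sum.inr l} := by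
  simp [stepSet, h]

theorem stepSet_of_act_some {i : Fin q} (h : π.act l = some i) :
    stepSet π l = (childrenF l i).image Sum.inl := by
  simp [stepSet, h]

theorem traj_zero : traj π l 0 = {Sum.inl l} :=
  rfl

theorem traj_succ (t : ℕ) :
    traj π l (t + 1) = (traj π l t).biUnion (Sum.elim (stepSet π) fun lu => {Sum.inr lu}) :=
  rfl

theorem extends_of_mem_traj {t : ℕ} {x : BState q C} (hx : x ∈ traj π l t) :
    Extends l (Sum.elim id id x) := by
  induction t generalizing x with
  | zero =>
    rw [traj_zero, mem_singleton] at hx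
    subst hx
    exact .refl l
  | succ t ih =>
    obtain ⟨y, hy, hxy⟩ := mem_biUnion.1 hx
    refine (ih hy).trans ?_
    rcases y with lu | lu
    · rw [Sum.elim_inl] at hxy
      cases hact : π.act lu with
      | none =>
        rw [stepSet_of_act_none hact, mem_singleton] at hxy
        subst hxy
        exact .refl lu
      | some i =>
        rw [stepSet_of_act_some hact] at hxy
        obtain ⟨_, hl', rfl⟩ := mem_image.1 hxy
        obtain ⟨j, rfl⟩ := mem_childrenF.1 hl'
        exact extends_child (π.valid lu i hact) j
    · rw [Sum.elim_inr, mem_singleton] at hxy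
      subst hxy
      exact .refl lu

theorem le_nsplits_of_inl_mem_traj {t : ℕ} {lu : Branch q C} (hx : Sum.inl lu ∈ traj π l t) :
    t ≤ nsplits lu := by
  induction t generalizing lu with
  | zero => exact Nat.zero_le _
  | succ t ih =>
    obtain ⟨lv | lv, hy, hxy⟩ := mem_biUnion.1 hx
    · cases hact : π.act lv with
      | none => simp [stepSet_of_act_none hact] at hxy
      | some i =>
        obtain ⟨j, rfl⟩ := mem_childrenF.1 (by simpa [stepSet_of_act_some hact] using hxy)
        rw [nsplits_child (π.valid lv i hact)]
        exact Nat.succ_le_succ (ih hy)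
    · simp at hxy

theorem traj_succ_of_forall_isRight {t : ℕ} (h : ∀ x ∈ traj π l t, x.isRight) :
    traj π l (t + 1) = traj π l t := by
  refine (biUnion_congr rfl fun x hx => ?_).trans biUnion_singleton_eq_self
  obtain ⟨lu, rfl⟩ := Sum.isRight_iff.1 (h x hx)
  rfl

theorem traj_eq_of_le {t s : ℕ} (h : ∀ x ∈ traj π l t, x.isRight) (hts : t ≤ s) :
    traj π l s = traj π l t := by
  induction s, hts using Nat.le_induction with
  | base => rfl
  | succ s _ ih => rw [traj_succ_of_forall_isRight (ih ▸ h), ih]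

theorem forall_isRight_traj_q_succ (l : Branch q C) : ∀ x ∈ traj π l (q + 1), x.isRight := by
  rintro (lu | lu) hx
  · exact absurd ((le_nsplits_of_inl_mem_traj hx).trans (nsplits_le lu)) (by omega)
  · rfl

theorem tau_spec (l : Branch q C) : 1 ≤ tau π l ∧ ∀ x ∈ traj π l (tau π l), x.isRight :=
  Nat.sInf_mem (s := {t | 1 ≤ t ∧ ∀ x ∈ traj π l t, x.isRight})
    ⟨q + 1, by omega, forall_isRight_traj_q_succ l⟩

theorem tau_le (l : Branch q C) : tau π l ≤ q + 1 :=
  Nat.sInf_le ⟨by omega, forall_isRight_traj_q_succ l⟩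

theorem traj_eq_traj_tau {s : ℕ} (hs : tau π l ≤ s) : traj π l s = traj π l (tau π l) :=
  traj_eq_of_le (tau_spec l).2 hs

theorem V_eq_sum_range (D : Multiset ((∀ i : Fin q, Fin (C i)) × Fin K)) (lam : ℝ) {N : ℕ}
    (hN : tau π l ≤ N) :
    V D lam π l = ∑ t ∈ range N, ∑ x ∈ traj π l t, rew D lam π x := by
  refine sum_subset (range_subset_range.2 hN) fun t _ ht => sum_eq_zero fun x hx => ?_
  rw [traj_eq_traj_tau (by simpa using ht)] at hx
  obtain ⟨lu, rfl⟩ := Sum.isRight_iff.1 ((tau_spec l).2 x hx)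
  rfl

theorem extends_of_mem_subDTof {x : Branch q C} (hx : x ∈ subDTof π l) : Extends l x := by
  obtain ⟨y, hy, rfl⟩ := mem_image.1 hx
  exact extends_of_mem_traj hy

section Terminal

variable (h : π.act l = none)
include h

theorem traj_one_of_act_none : traj π l 1 = {Sum.inr l} := by
  simp [traj_succ, traj_zero, stepSet_of_act_none h]

theorem tau_of_act_none : tau π l = 1 :=
  le_antisymm (Nat.sInf_le ⟨le_rfl, by simp [traj_one_of_act_none h]⟩) (tau_spec l).1

theorem subDTof_of_act_none : subDTof π l = {l} := by
  simp [subDTof, tau_of_act_none h, traj_one_of_act_none h]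

theorem V_of_act_none (D : Multiset ((∀ i : Fin q, Fin (C i)) × Fin K)) (lam : ℝ) :
    V D lam π l = Hb D l := by
  simp [V, tau_of_act_none h, traj_zero, rew, h]

end Terminal

section Split

variable {i : Fin q} (h : π.act l = some i)
include h

theorem traj_succ_of_act_some (t : ℕ) :
    traj π l (t + 1) = univ.biUnion fun j => traj π (child l i j) t := by
  induction t with
  | zero =>
    ext x
    simp [traj_succ, traj_zero, stepSet_of_act_some h, childrenF, eq_comm]
  | succ t ih => rw [traj_succ, ih, biUnion_biUnion]; rfl

theorem V_of_act_some (D : Multiset ((∀ i : Fin q, Fin (C i)) × Fin K)) (lam : ℝ) :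
    V D lam π l = -lam + ∑ j, V D lam π (child l i j) := by
  rw [V_eq_sum_range D lam (N := q + 1 + 1) ((tau_le l).trans (by omega)), sum_range_succ']
  simp_rw [traj_succ_of_act_some h]
  rw [sum_congr rfl fun t _ => sum_biUnion fun j _ j' _ hj => disjoint_left.2 fun _ hx hx' =>
    hj (eq_of_extends_child (extends_of_mem_traj hx) (extends_of_mem_traj hx')), sum_comm,
    add_comm]
  congr 1
  · simp [traj_zero, rew, h]
  · exact sum_congr rfl fun j _ => (V_eq_sum_range D lam (tau_le _)).symm

theorem subDTof_of_act_some :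
    subDTof π l = univ.biUnion fun j => subDTof π (child l i j) := by
  rw [subDTof, ← traj_eq_traj_tau (s := q + 1 + 1) ((tau_le l).trans (by omega)),
    traj_succ_of_act_some h, biUnion_image]
  exact biUnion_congr rfl fun j _ => by rw [subDTof, traj_eq_traj_tau (tau_le _)]

theorem HT_of_act_some (D : Multiset ((∀ i : Fin q, Fin (C i)) × Fin K)) :
    HT D (subDTof π l) = ∑ j, HT D (subDTof π (child l i j)) := by
  rw [subDTof_of_act_some h]
  exact sum_biUnion fun j _ j' _ hj => disjoint_left.2 fun _ hx hx' =>
    hj (eq_of_extends_child (extends_of_mem_subDTof hx) (extends_of_mem_subDTof hx'))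

end Split

end Trajectories

namespace SubDT

variable {q : ℕ} {C : Fin q → ℕ} {l : Branch q C} {T : Finset (Branch q C)} {m : ℕ}

theorem extends_of_mem (h : SubDT l T m) : ∀ x ∈ T, Extends l x := by
  induction h with
  | leaf =>
    intro x hx
    rw [mem_singleton.1 hx]
    exact .refl l
  | split T m l' i _ hl' hi ih =>
    intro x hx
    rcases mem_union.1 hx with hx | hx
    · exact ih x (mem_of_mem_erase hx)
    · obtain ⟨j, rfl⟩ := mem_childrenF.1 hx
      exact (ih l' hl').trans (extends_child hi j)

-- `hfresh` keeps the new leaves apart from the remaining old ones, so the union loses none.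
theorem graft (h : SubDT l T m) {l' : Branch q C} (hl' : l' ∈ T)
    (hfresh : ∀ x ∈ T, Extends l' x → x = l') {T' : Finset (Branch q C)} {m' : ℕ}
    (h' : SubDT l' T' m') : SubDT l (T.erase l' ∪ T') (m + m') := by
  induction h' with
  | leaf => rwa [union_singleton, insert_erase hl']
  | split T₀ m₀ l'' i h₀ hl'' hi ih =>
    have hnotin : l'' ∉ T.erase l' := fun hmem =>
      ne_of_mem_erase hmem (hfresh l'' (mem_of_mem_erase hmem) (h₀.extends_of_mem l'' hl''))
    have := ih.split _ _ _ l'' i (mem_union_right _ hl'') hi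
    rwa [erase_union_distrib, erase_eq_of_notMem hnotin, union_assoc] at this

theorem children {i : Fin q} (hi : l i = none) : SubDT l (childrenF l i) 1 := by
  simpa using (leaf l).split _ _ _ l i (mem_singleton_self l) hi

theorem biUnion_child {i : Fin q} (hi : l i = none) {T : Fin (C i) → Finset (Branch q C)}
    {m : Fin (C i) → ℕ} (hT : ∀ j, SubDT (child l i j) (T j) (m j)) :
    SubDT l (univ.biUnion T) (1 + ∑ j, m j) := by
  classical
  let F (s : Finset (Fin (C i))) (j : Fin (C i)) : Finset (Branch q C) :=
    if j ∈ s then T j else {child l i j}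
  have extends_of_mem_F {s j x} (hx : x ∈ F s j) : Extends (child l i j) x := by
    by_cases hj : j ∈ s
    · exact (hT j).extends_of_mem x (by simpa [F, hj] using hx)
    · obtain rfl : x = child l i j := by simpa [F, hj] using hx
      exact .refl _
  suffices ∀ s, SubDT l (univ.biUnion (F s)) (1 + ∑ j ∈ s, m j) by simpa [F] using this univ
  intro s
  induction s using Finset.induction_on with
  | empty => simpa [F, biUnion_singleton, _root_.childrenF] using children hi
  | insert j s hj ih =>
    have hFj : F s j = {child l i j} := if_neg hj
    have hfresh : ∀ x ∈ univ.biUnion (F s), Extends (child l i j) x → x = child l i j := by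
      intro x hx hjx
      obtain ⟨j', -, hx⟩ := mem_biUnion.1 hx
      obtain rfl := eq_of_extends_child hjx (extends_of_mem_F hx)
      simpa [hFj] using hx
    have hupdate : F (insert j s) = Function.update (F s) j (T j) := by
      ext1 j'
      rcases eq_or_ne j' j with rfl | hne
      · simp [F]
      · simp [F, hne]
    have hchild : ∀ j', j' ≠ j → child l i j ∉ F s j' := fun j' hne hmem =>
      hne (eq_of_extends_child (.refl _) (extends_of_mem_F hmem)).symm
    rw [sum_insert hj, hupdate, biUnion_update_eq_erase_union hFj hchild, add_comm (m j),
      ← add_assoc]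
    exact ih.graft (mem_biUnion.2 ⟨j, mem_univ _, by simp [hFj]⟩) hfresh (hT j)

end SubDT

theorem value_eq_regularized_objective_general {q K : ℕ}
    {C : Fin q → ℕ}
    (D : Multiset ((∀ i : Fin q, Fin (C i)) × Fin K))
    (lam : ℝ)
    (π : Policy q C) (l : Branch q C) :
    ∃ m : ℕ, SubDT l (subDTof π l) m ∧
      V D lam π l = -lam * m + HT D (subDTof π l) := by
  induction hn : q - nsplits l using Nat.strong_induction_on generalizing l with
  | _ n ih =>
    cases hact : π.act l with
    | none =>
      refine ⟨0, ?_, ?_⟩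
      · rw [subDTof_of_act_none hact]
        exact .leaf l
      · simp [V_of_act_none hact, subDTof_of_act_none hact, HT]
    | some i =>
      have hi := π.valid l i hact
      have hlt := nsplits_lt hi
      choose m hT hV using fun j => ih _ (by rw [← hn, nsplits_child hi j]; omega) (child l i j) rfl
      refine ⟨1 + ∑ j, m j, subDTof_of_act_some hact ▸ SubDT.biUnion_child hi hT, ?_⟩
      rw [V_of_act_some hact, HT_of_act_some hact, sum_congr rfl fun j _ => hV j, sum_add_distrib]
      push_cast
      rw [mul_add, mul_sum]
      ring

/-- `V^π(l) = R(T_l^π) = -λ·splits(T_l^π) + H(T_l^π)`: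
the sub-DT of `π` rooted in `l` is a sub-DT rooted in `l` (with some number of
splits `m`), and the value of `π` from `l` equals its regularized objective. -/
theorem value_eq_regularized_objective {q K : ℕ} (hq : 2 ≤ q) (hK : 2 ≤ K)
    {C : Fin q → ℕ} (hC : ∀ i, 2 ≤ C i)
    (D : Multiset ((∀ i : Fin q, Fin (C i)) × Fin K)) (hD : D ≠ 0)
    (lam : ℝ) (hlam0 : 0 < lam) (hlam1 : lam < 1)
    (π : Policy q C) (l : Branch q C) :
    ∃ m : ℕ, SubDT l (subDTof π l) m ∧
      V D lam π l = -lam * m + HT D (subDTof π l) :=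
  value_eq_regularized_objective_general D lam π l
end

section
/- For every branch l and every sub-DT T rooted in l, the accuracy contribution of T is bounded by the mass of l: H(T) = ∑_{l_u ∈ T} H(l_u) ≤ n(l)/n; consequently, the regularized objective satisfies R(T) ≤ max{ H(l), −λ + n(l)/n }. -/
open Finset

/-!
Splitting a branch on an unused feature partitions its data points among the children, so the
masses `n(l')` of the leaves of a sub-DT rooted in `l` add up to at most `n(l)`. Since each leaf has
`H(l') ≤ n(l')/n`, this gives `H(T) ≤ n(l)/n`. A sub-DT without splits is `{l}` itself, with
`R = H(l)`; one with at least one split pays a penalty of at least `λ`.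
-/

lemma Multiset.sum_card_filter_eq_card {α β : Type*} [Fintype β] [DecidableEq β]
    (s : Multiset α) (f : α → β) :
    ∑ b : β, (s.filter (fun a => f a = b)).card = Multiset.card s := by
  have hfiber : ∀ b, (s.filter (fun a => f a = b)).card = (s.map f).count b := by
    intro b
    rw [Multiset.count_map]
    exact congrArg Multiset.card (Multiset.filter_congr fun a _ => eq_comm)
  simp only [hfiber, Multiset.sum_count_eq_card (fun _ _ => Finset.mem_univ _),
    Multiset.card_map]

section Branches

variable {q : ℕ} {C : Fin q → ℕ}

lemma inBranch_child_iff {l : Branch q C} {i : Fin q} (hi : l i = none) (j : Fin (C i))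
    (x : ∀ i, Fin (C i)) :
    inBranch (child l i j) x ↔ inBranch l x ∧ x i = j := by
  constructor
  · intro h
    refine ⟨fun i' c hc => ?_, h i j (by simp [child])⟩
    have hne : i' ≠ i := by rintro rfl; simp [hi] at hc
    exact h i' c (by simpa [child, Function.update_of_ne hne] using hc)
  · rintro ⟨h, hx⟩ i' c hc
    by_cases hii : i' = i
    · subst hii
      simp only [child, Function.update_self, Option.some.injEq] at hc
      rw [hx, hc]
    · exact h i' c (by simpa [child, Function.update_of_ne hii] using hc)

lemma child_injective (l : Branch q C) (i : Fin q) : Function.Injective (child l i) :=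
  fun _ _ h => by simpa [child] using congrFun h i

lemma sum_childrenF {M : Type*} [AddCommMonoid M] (l : Branch q C) (i : Fin q)
    (f : Branch q C → M) :
    ∑ c ∈ childrenF l i, f c = ∑ j : Fin (C i), f (child l i j) :=
  Finset.sum_image fun _ _ _ _ h => child_injective l i h

lemma SubDT.eq_singleton_of_zero {l : Branch q C} {T : Finset (Branch q C)}
    (hT : SubDT l T 0) : T = {l} := by
  cases hT; rfl

variable {K : ℕ} (D : Multiset ((∀ i : Fin q, Fin (C i)) × Fin K))

lemma sum_nIn_childrenF {l : Branch q C} {i : Fin q} (hi : l i = none) :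
    ∑ c ∈ childrenF l i, nIn D c = nIn D l := by
  have hchild : ∀ j : Fin (C i), nIn D (child l i j)
      = ((D.filter (fun p => inBranch l p.1)).filter (fun p => p.1 i = j)).card := by
    intro j
    rw [nIn, Multiset.filter_filter]
    exact congrArg Multiset.card
      (Multiset.filter_congr fun p _ => (inBranch_child_iff hi j p.1).trans and_comm)
  rw [sum_childrenF]
  simp only [hchild]
  exact Multiset.sum_card_filter_eq_card _ _

lemma SubDT.sum_nIn_le {l : Branch q C} {T : Finset (Branch q C)} {m : ℕ}
    (hT : SubDT l T m) : ∑ u ∈ T, nIn D u ≤ nIn D l := by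
  induction hT with
  | leaf => simp
  | split T m l' i _ hmem hnone ih =>
    have hunion := Finset.sum_union_inter (s₁ := T.erase l') (s₂ := childrenF l' i) (f := nIn D)
    have herase := Finset.sum_erase_add T (nIn D) hmem
    have hchildren := sum_nIn_childrenF D hnone
    omega

lemma nk_le_nIn (l : Branch q C) (k : Fin K) : nk D l k ≤ nIn D l :=
  Multiset.card_le_card (Multiset.monotone_filter_right _ fun _ hp => hp.1)

lemma Hb_le_nIn_div (l : Branch q C) :
    Hb D l ≤ (nIn D l : ℝ) / (Multiset.card D : ℝ) :=
  div_le_div_of_nonneg_right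
    (by exact_mod_cast Finset.sup_le fun k _ => nk_le_nIn D l k) (Nat.cast_nonneg _)

lemma SubDT.HT_le {l : Branch q C} {T : Finset (Branch q C)} {m : ℕ} (hT : SubDT l T m) :
    HT D T ≤ (nIn D l : ℝ) / (Multiset.card D : ℝ) :=
  calc HT D T ≤ ∑ u ∈ T, (nIn D u : ℝ) / (Multiset.card D : ℝ) :=
        Finset.sum_le_sum fun u _ => Hb_le_nIn_div D u
    _ = ((∑ u ∈ T, nIn D u : ℕ) : ℝ) / (Multiset.card D : ℝ) := by
        rw [← Finset.sum_div, Nat.cast_sum]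
    _ ≤ (nIn D l : ℝ) / (Multiset.card D : ℝ) :=
        div_le_div_of_nonneg_right (by exact_mod_cast hT.sum_nIn_le D) (Nat.cast_nonneg _)

end Branches

theorem subDT_accuracy_bound_general {q K : ℕ}
    {C : Fin q → ℕ}
    (D : Multiset ((∀ i : Fin q, Fin (C i)) × Fin K))
    (lam : ℝ) (hlam0 : 0 < lam)
    (l : Branch q C) (T : Finset (Branch q C)) (m : ℕ) (hT : SubDT l T m) :
    HT D T ≤ (nIn D l : ℝ) / (Multiset.card D : ℝ) ∧
    -lam * m + HT D T ≤ max (Hb D l) (-lam + (nIn D l : ℝ) / (Multiset.card D : ℝ)) := by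
  refine ⟨hT.HT_le D, ?_⟩
  cases m with
  | zero =>
    rw [hT.eq_singleton_of_zero]
    simp [HT]
  | succ m =>
    have hpenalty : -lam * ((m + 1 : ℕ) : ℝ) ≤ -lam := by
      push_cast
      nlinarith [(Nat.cast_nonneg m : (0 : ℝ) ≤ m)]
    exact le_max_of_le_right (by linarith [hT.HT_le D])

/-- For every branch `l` and every sub-DT `T` rooted in `l`:
`H(T) ≤ n(l)/n` and `R(T) ≤ max { H(l), -λ + n(l)/n }`. -/
theorem subDT_accuracy_bound {q K : ℕ} (hq : 2 ≤ q) (hK : 2 ≤ K)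
    {C : Fin q → ℕ} (hC : ∀ i, 2 ≤ C i)
    (D : Multiset ((∀ i : Fin q, Fin (C i)) × Fin K)) (hD : D ≠ 0)
    (lam : ℝ) (hlam0 : 0 < lam) (hlam1 : lam < 1)
    (l : Branch q C) (T : Finset (Branch q C)) (m : ℕ) (hT : SubDT l T m) :
    HT D T ≤ (nIn D l : ℝ) / (Multiset.card D : ℝ) ∧
    -lam * m + HT D T ≤ max (Hb D l) (-lam + (nIn D l : ℝ) / (Multiset.card D : ℝ)) :=
  subDT_accuracy_bound_general D lam hlam0 l T m hT
end
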